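/- For every integer p ≥ 9, every integer m ≥ 1, and k* defined as 3 if p ≤ 10 and ⌊p/2⌋ − 1 if p ≥ 11, set k₀ = min(m, k*). Then for every integer k with 1 ≤ k ≤ min(m, p), one has C(p,k)·k₀² ≤ C(p,k₀)·k². In particular, k ↦ C(p,k)/k² is non-decreasing on {1, …, k*}, so the maximum of C(p,k)/k² over 1 ≤ k ≤ m is attained at k = min(m, k*). -/

import Mathlib

/-!
Write `f k = C(p,k) / k²`. Since `C(p,b+1) (b+1) = C(p,b) (p-b)`, the ratio `f (b+1) / f b` is
`(p-b) b² / (b+1)³`, so `f` increases at `b` when `(b+1)³ ≤ (p-b) b²` and decreases when the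
reverse inequality holds. For `p ≥ 9` the first holds whenever `1 ≤ b` and `b + 1 ≤ k*`, and the
second whenever `b ≥ k*`, so `f` rises up to `k*` and falls afterwards.
-/

open Set

lemma choose_mul_succ_sq_le {p b : ℕ} (h : (b + 1) ^ 3 ≤ (p - b) * b ^ 2) :
    p.choose b * (b + 1) ^ 2 ≤ p.choose (b + 1) * b ^ 2 := by
  refine Nat.le_of_mul_le_mul_right ?_ b.succ_pos
  calc p.choose b * (b + 1) ^ 2 * (b + 1) = p.choose b * (b + 1) ^ 3 := by ring
    _ ≤ p.choose b * ((p - b) * b ^ 2) := by gcongr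
    _ = p.choose (b + 1) * b ^ 2 * (b + 1) := by
      rw [← mul_assoc, ← Nat.choose_succ_right_eq]; ring

lemma choose_succ_mul_sq_le {p b : ℕ} (h : (p - b) * b ^ 2 ≤ (b + 1) ^ 3) :
    p.choose (b + 1) * b ^ 2 ≤ p.choose b * (b + 1) ^ 2 := by
  refine Nat.le_of_mul_le_mul_right ?_ b.succ_pos
  calc p.choose (b + 1) * b ^ 2 * (b + 1) = p.choose b * ((p - b) * b ^ 2) := by
        rw [← mul_assoc, ← Nat.choose_succ_right_eq]; ring
    _ ≤ p.choose b * (b + 1) ^ 3 := by gcongr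
    _ = p.choose b * (b + 1) ^ 2 * (b + 1) := by ring

def chooseDivSq (p k : ℕ) : ℚ := p.choose k / k ^ 2

lemma chooseDivSq_le_chooseDivSq_iff {p a b : ℕ} (ha : 0 < a) (hb : 0 < b) :
    chooseDivSq p a ≤ chooseDivSq p b ↔ p.choose a * b ^ 2 ≤ p.choose b * a ^ 2 := by
  rw [chooseDivSq, chooseDivSq, div_le_div_iff₀ (by positivity) (by positivity)]
  norm_cast

lemma chooseDivSq_monotoneOn {p n : ℕ}
    (h : ∀ b, 1 ≤ b → b + 1 ≤ n → (b + 1) ^ 3 ≤ (p - b) * b ^ 2) :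
    MonotoneOn (chooseDivSq p) (Icc 1 n) := by
  refine monotoneOn_of_le_succ ordConnected_Icc fun b _ hb hb' ↦ ?_
  rw [Order.succ_eq_add_one] at hb' ⊢
  exact (chooseDivSq_le_chooseDivSq_iff hb.1 b.succ_pos).2
    (choose_mul_succ_sq_le (h b hb.1 hb'.2))

lemma chooseDivSq_antitoneOn {p n : ℕ} (hn : 0 < n)
    (h : ∀ b, n ≤ b → (p - b) * b ^ 2 ≤ (b + 1) ^ 3) :
    AntitoneOn (chooseDivSq p) (Ici n) :=
  antitoneOn_nat_Ici_of_succ_le fun b hb ↦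
    (chooseDivSq_le_chooseDivSq_iff b.succ_pos (hn.trans_le hb)).2
      (choose_succ_mul_sq_le (h b hb))

lemma succ_cube_le_mul_sq {b q : ℕ} (hb : 4 ≤ b) (hq : b + 4 ≤ q) :
    (b + 1) ^ 3 ≤ q * b ^ 2 := by
  nlinarith [Nat.mul_le_mul_right (b ^ 2) hq]

lemma mul_sq_le_succ_cube {b q : ℕ} (hq : q ≤ b + 3) : q * b ^ 2 ≤ (b + 1) ^ 3 := by
  nlinarith [Nat.mul_le_mul_right (b ^ 2) hq]

def kStar (p : ℕ) : ℕ := if p ≤ 10 then 3 else p / 2 - 1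

lemma three_le_kStar (p : ℕ) : 3 ≤ kStar p := by
  unfold kStar; split_ifs <;> omega

lemma succ_cube_le_of_succ_le_kStar {p b : ℕ} (hp : 9 ≤ p) (hb : 1 ≤ b)
    (hbk : b + 1 ≤ kStar p) : (b + 1) ^ 3 ≤ (p - b) * b ^ 2 := by
  unfold kStar at hbk
  rcases lt_or_ge b 4 with hb4 | hb4
  · split_ifs at hbk <;> interval_cases b <;> omega
  · split_ifs at hbk
    · omega
    · exact succ_cube_le_mul_sq hb4 (by omega)

lemma le_succ_cube_of_kStar_le {p b : ℕ} (hp : 9 ≤ p) (hbk : kStar p ≤ b) :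
    (p - b) * b ^ 2 ≤ (b + 1) ^ 3 := by
  by_cases h : p = 10 ∧ b = 3
  · obtain ⟨rfl, rfl⟩ := h; norm_num
  · unfold kStar at hbk
    exact mul_sq_le_succ_cube (by split_ifs at hbk <;> omega)

theorem stmt_4_general (p m k : ℕ) (hp : 9 ≤ p)
    (kstar : ℕ) (hkstar : kstar = if p ≤ 10 then 3 else p / 2 - 1)
    (k₀ : ℕ) (hk₀ : k₀ = min m kstar)
    (hk1 : 1 ≤ k) (hk : k ≤ min m p) :
    p.choose k * k₀ ^ 2 ≤ p.choose k₀ * k ^ 2 := by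
  replace hkstar : kstar = kStar p := hkstar
  have h3 := three_le_kStar p
  subst hkstar
  rw [← chooseDivSq_le_chooseDivSq_iff hk1 (by omega)]
  rcases le_or_gt k k₀ with hle | hlt
  · exact chooseDivSq_monotoneOn (fun b hb hbk ↦ succ_cube_le_of_succ_le_kStar hp hb hbk)
      ⟨hk1, by omega⟩ ⟨by omega, by omega⟩ hle
  · obtain rfl : k₀ = kStar p := by omega
    exact chooseDivSq_antitoneOn (by omega) (fun b ↦ le_succ_cube_of_kStar_le hp)
      self_mem_Ici (by omega : kStar p ≤ k) hlt.le

/-- For every integer p ≥ 9, every integer m ≥ 1, with k* = 3 if p ≤ 10 and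
k* = ⌊p/2⌋ − 1 if p ≥ 11, and k₀ = min(m, k*): for every integer k with
1 ≤ k ≤ min(m, p), one has C(p,k)·k₀² ≤ C(p,k₀)·k². In particular the maximum of
C(p,k)/k² over 1 ≤ k ≤ m is attained at k = min(m, k*). -/
theorem stmt_4 (p m k : ℕ) (hp : 9 ≤ p) (hm : 1 ≤ m)
    (kstar : ℕ) (hkstar : kstar = if p ≤ 10 then 3 else p / 2 - 1)
    (k₀ : ℕ) (hk₀ : k₀ = min m kstar)
    (hk1 : 1 ≤ k) (hk : k ≤ min m p) :
    p.choose k * k₀ ^ 2 ≤ p.choose k₀ * k ^ 2 :=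
  stmt_4_general p m k hp kstar hkstar k₀ hk₀ hk1 hk
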